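/- The third derivative of f(x) = sin(x)·(1 - 1/(8·sin³(x/2))) is strictly positive on (0, 2π). -/

import Mathlib

open Real Set

noncomputable def f (x : ℝ) : ℝ := Real.sin x * (1 - 1 / (8 * Real.sin (x/2)^3))

/-!
Write `s = sin (x / 2)` and `c = cos (x / 2)`. Where `s ≠ 0`, `f = 2 s c - c / (4 s²)`, and three
differentiations (with `s' = c / 2`, `c' = -s / 2`, `c² = 1 - s²`) give
`f''' = (64 s⁷ - 32 s⁵ + s⁴ - 20 s² + 24) / (32 s⁵)`.
On `(0, 2π)` we have `0 < s ≤ 1`, where this numerator is positive.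
-/

theorem Set.EqOn.iteratedDeriv_succ_of_hasDerivAt {𝕜 E : Type*} [NontriviallyNormedField 𝕜]
    [NormedAddCommGroup E] [NormedSpace 𝕜 E] {U : Set 𝕜} {n : ℕ} {f g g' : 𝕜 → E}
    (hU : IsOpen U) (h : EqOn (iteratedDeriv n f) g U) (hg : ∀ y ∈ U, HasDerivAt g (g' y) y) :
    EqOn (iteratedDeriv (n + 1) f) g' U := fun y hy => by
  rw [iteratedDeriv_succ, h.deriv hU hy]
  exact (hg y hy).deriv

theorem hasDerivAt_sin_half (x : ℝ) :
    HasDerivAt (fun y => sin (y / 2)) (cos (x / 2) / 2) x :=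
  ((hasDerivAt_id' x).div_const 2).sin.congr_deriv (by ring)

theorem hasDerivAt_cos_half (x : ℝ) :
    HasDerivAt (fun y => cos (y / 2)) (-sin (x / 2) / 2) x :=
  ((hasDerivAt_id' x).div_const 2).cos.congr_deriv (by ring)

noncomputable def fHalfAngle (x : ℝ) : ℝ :=
  2 * sin (x / 2) * cos (x / 2) - cos (x / 2) / (4 * sin (x / 2) ^ 2)

noncomputable def f' (x : ℝ) : ℝ :=
  1 - 2 * sin (x / 2) ^ 2 + (2 - sin (x / 2) ^ 2) / (8 * sin (x / 2) ^ 3)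

noncomputable def f'' (x : ℝ) : ℝ :=
  cos (x / 2) * ((sin (x / 2) ^ 2 - 6) / (16 * sin (x / 2) ^ 4) - 2 * sin (x / 2))

noncomputable def f''' (x : ℝ) : ℝ :=
  (64 * sin (x / 2) ^ 7 - 32 * sin (x / 2) ^ 5 + sin (x / 2) ^ 4 - 20 * sin (x / 2) ^ 2 + 24) /
    (32 * sin (x / 2) ^ 5)

theorem f_eq_fHalfAngle {x : ℝ} (hs : sin (x / 2) ≠ 0) : f x = fHalfAngle x := by
  have hsin : sin x = 2 * sin (x / 2) * cos (x / 2) := by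
    rw [← sin_two_mul]; ring_nf
  rw [f, fHalfAngle, hsin]
  field_simp
  ring

theorem hasDerivAt_fHalfAngle {x : ℝ} (hs : sin (x / 2) ≠ 0) :
    HasDerivAt fHalfAngle (f' x) x := by
  have h := (((hasDerivAt_sin_half x).const_mul 2).fun_mul (hasDerivAt_cos_half x)).fun_sub
    ((hasDerivAt_cos_half x).fun_div ((hasDerivAt_sin_half x).fun_pow 2 |>.const_mul 4)
      (by positivity))
  refine h.congr_deriv ?_
  rw [f']
  field_simp
  rw [cos_sq']
  ring

theorem hasDerivAt_f' {x : ℝ} (hs : sin (x / 2) ≠ 0) : HasDerivAt f' (f'' x) x := by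
  have h := ((hasDerivAt_sin_half x).fun_pow 2 |>.const_mul 2 |>.const_sub 1).fun_add
    (((hasDerivAt_sin_half x).fun_pow 2 |>.const_sub 2).fun_div
      ((hasDerivAt_sin_half x).fun_pow 3 |>.const_mul 8) (by positivity))
  refine h.congr_deriv ?_
  rw [f'']
  field_simp
  ring

theorem hasDerivAt_f'' {x : ℝ} (hs : sin (x / 2) ≠ 0) : HasDerivAt f'' (f''' x) x := by
  have h := (hasDerivAt_cos_half x).fun_mul
    ((((hasDerivAt_sin_half x).fun_pow 2 |>.sub_const 6).fun_div
      ((hasDerivAt_sin_half x).fun_pow 4 |>.const_mul 16) (by positivity)).fun_sub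
      ((hasDerivAt_sin_half x).const_mul 2))
  refine h.congr_deriv ?_
  rw [f''']
  field_simp
  rw [cos_sq']
  ring

theorem f'''_pos {x : ℝ} (hs : 0 < sin (x / 2)) : 0 < f''' x := by
  have hs₁ : sin (x / 2) ≤ 1 := sin_le_one _
  refine div_pos ?_ (by positivity)
  nlinarith [pow_le_one₀ hs.le hs₁ (n := 5), pow_pos hs 4, sq_nonneg (2 * sin (x / 2) ^ 2 - 1)]

theorem stmt4 : ∀ x ∈ Ioo (0:ℝ) (2*π), iteratedDeriv 3 f x > 0 := by
  have hsin : ∀ y ∈ Ioo (0:ℝ) (2*π), 0 < sin (y / 2) := fun y hy =>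
    sin_pos_of_pos_of_lt_pi (by linarith [hy.1]) (by linarith [hy.2])
  have h₀ : EqOn (iteratedDeriv 0 f) fHalfAngle (Ioo 0 (2*π)) := fun y hy => by
    rw [iteratedDeriv_zero, f_eq_fHalfAngle (hsin y hy).ne']
  have h₃ : EqOn (iteratedDeriv 3 f) f''' (Ioo 0 (2*π)) :=
    ((h₀.iteratedDeriv_succ_of_hasDerivAt isOpen_Ioo
      fun y hy => hasDerivAt_fHalfAngle (hsin y hy).ne').iteratedDeriv_succ_of_hasDerivAt
      isOpen_Ioo fun y hy => hasDerivAt_f' (hsin y hy).ne').iteratedDeriv_succ_of_hasDerivAt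
      isOpen_Ioo fun y hy => hasDerivAt_f'' (hsin y hy).ne'
  intro x hx
  rw [h₃ hx]
  exact f'''_pos (hsin x hx)
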